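/- arXiv:2312.00350 — 2 statements merged into one kernel-verified Lean document; each statement's English description precedes it below -/
import Mathlib

section
/- For u > arccosh(3/2), the derivative φ′(u) = sinh(u)/sinh(φ(u)) of φ(u) = arccosh(cosh u − 1/2) is strictly monotonically decreasing, with φ′(u) → ∞ as u → arccosh(3/2)⁺ and φ′(u) → 1 as u → ∞. -/
noncomputable def arcosh (x : ℝ) : ℝ := Real.log (x + Real.sqrt (x ^ 2 - 1))

noncomputable def kappa : ℝ := arcosh (3 / 2)

noncomputable def phi (u : ℝ) : ℝ := arcosh (Real.cosh u - 1 / 2)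

/-!
With `c = cosh u`, we have `sinh u = √(c² - 1)` and `sinh (phi u) = √((c - 1/2)² - 1)`, so the
ratio is `√(phiDerivSq c)` for a rational function `phiDerivSq` of `c`. On `c > 3/2` this
function is strictly decreasing, its denominator `(c - 3/2)(c + 1/2)` vanishes at `c = 3/2`
while the numerator stays positive, and it tends to `1` at infinity. Since `cosh` increases
from `3/2` to `∞` on `(kappa, ∞)`, the three claims follow.
-/

open Real Filter Set Topology

-- `arcosh` from the definitions is `Real.arcosh` by definition, so Mathlib's API applies to it.
lemma kappa_pos : 0 < kappa := arcosh_pos (by norm_num)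

lemma cosh_kappa : cosh kappa = 3 / 2 := cosh_arcosh (by norm_num)

lemma three_halves_lt_cosh {u : ℝ} (hu : kappa < u) : 3 / 2 < cosh u :=
  cosh_kappa ▸ cosh_strictMonoOn kappa_pos.le (kappa_pos.trans hu).le hu

lemma sinh_eq_sqrt_cosh_sq_sub_one {u : ℝ} (hu : 0 ≤ u) : sinh u = √(cosh u ^ 2 - 1) := by
  rw [← sinh_arcosh (one_le_cosh u), arcosh_cosh hu]

lemma sinh_phi {u : ℝ} (hu : kappa < u) : sinh (phi u) = √((cosh u - 1 / 2) ^ 2 - 1) :=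
  sinh_arcosh (by linarith [three_halves_lt_cosh hu])

/-- `phi' (u) ^ 2` as a function of `c = cosh u`. -/
noncomputable def phiDerivSq (c : ℝ) : ℝ := (c ^ 2 - 1) / ((c - 1 / 2) ^ 2 - 1)

lemma sinh_div_sinh_phi {u : ℝ} (hu : kappa < u) :
    sinh u / sinh (phi u) = √(phiDerivSq (cosh u)) := by
  rw [phiDerivSq, sqrt_div (by nlinarith [three_halves_lt_cosh hu]),
    sinh_eq_sqrt_cosh_sq_sub_one (kappa_pos.trans hu).le, sinh_phi hu]

lemma phiDerivSq_pos {c : ℝ} (hc : 3 / 2 < c) : 0 < phiDerivSq c :=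
  div_pos (by nlinarith) (by nlinarith)

lemma phiDerivSq_strictAntiOn : StrictAntiOn phiDerivSq (Ioi (3 / 2)) := by
  intro a (ha : 3 / 2 < a) b (hb : 3 / 2 < b) hab
  have key : (a ^ 2 - 1) * ((b - 1 / 2) ^ 2 - 1) - (b ^ 2 - 1) * ((a - 1 / 2) ^ 2 - 1)
      = (b - a) * (a * b - (a + b) / 4 + 1) := by ring
  have hpos : 0 < (b - a) * (a * b - (a + b) / 4 + 1) :=
    mul_pos (sub_pos.mpr hab) (by nlinarith)
  rw [phiDerivSq, phiDerivSq, div_lt_div_iff₀ (by nlinarith) (by nlinarith)]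
  linarith

lemma tendsto_phiDerivSq_nhdsGT : Tendsto phiDerivSq (𝓝[>] (3 / 2)) atTop := by
  have hnum : Tendsto (fun c : ℝ => c ^ 2 - 1) (𝓝[>] (3 / 2)) (𝓝 (5 / 4)) :=
    ((continuous_pow 2).sub continuous_const).tendsto' _ _ (by norm_num) |>.mono_left
      nhdsWithin_le_nhds
  have hden : Tendsto (fun c : ℝ => (c - 1 / 2) ^ 2 - 1) (𝓝[>] (3 / 2)) (𝓝[>] 0) := by
    refine tendsto_nhdsWithin_iff.mpr ⟨?_, ?_⟩
    · exact (((continuous_id.sub continuous_const).pow 2).sub continuous_const).tendsto' _ _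
        (by norm_num) |>.mono_left nhdsWithin_le_nhds
    · filter_upwards [self_mem_nhdsWithin] with c (hc : 3 / 2 < c)
      show 0 < (c - 1 / 2) ^ 2 - 1
      nlinarith
  exact hnum.pos_mul_atTop (by norm_num) hden.inv_tendsto_nhdsGT_zero

lemma tendsto_phiDerivSq_atTop : Tendsto phiDerivSq atTop (𝓝 1) := by
  have hlim : Tendsto (fun t : ℝ => (1 - t ^ 2) / (1 - t - 3 / 4 * t ^ 2)) (𝓝 0) (𝓝 1) := by
    have : ContinuousAt (fun t : ℝ => (1 - t ^ 2) / (1 - t - 3 / 4 * t ^ 2)) 0 :=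
      ContinuousAt.div (by fun_prop) (by fun_prop) (by norm_num)
    simpa using this.tendsto
  refine (hlim.comp tendsto_inv_atTop_zero).congr' ?_
  filter_upwards [eventually_gt_atTop (3 / 2)] with c hc
  have hden : (c - 1 / 2) ^ 2 - 1 ≠ 0 := by nlinarith
  have hc0 : c ≠ 0 := by positivity
  simp only [Function.comp, phiDerivSq]
  field_simp
  ring

lemma tendsto_cosh_atTop : Tendsto cosh atTop atTop :=
  tendsto_atTop_mono (fun x => by rw [cosh_eq]; linarith [exp_pos (-x)])
    (tendsto_exp_atTop.atTop_div_const two_pos)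

lemma tendsto_cosh_nhdsGT_kappa : Tendsto cosh (𝓝[>] kappa) (𝓝[>] (3 / 2)) :=
  tendsto_nhdsWithin_iff.mpr
    ⟨cosh_kappa ▸ continuous_cosh.continuousAt.tendsto.mono_left nhdsWithin_le_nhds,
      eventually_mem_nhdsWithin.mono fun _ => three_halves_lt_cosh⟩

theorem phi_deriv_strictAnti_and_limits :
    StrictAntiOn (fun u => Real.sinh u / Real.sinh (phi u)) (Set.Ioi kappa) ∧
      Filter.Tendsto (fun u => Real.sinh u / Real.sinh (phi u))
        (nhdsWithin kappa (Set.Ioi kappa)) Filter.atTop ∧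
      Filter.Tendsto (fun u => Real.sinh u / Real.sinh (phi u))
        Filter.atTop (nhds 1) := by
  have hratio : EqOn (fun u => √(phiDerivSq (cosh u))) (fun u => sinh u / sinh (phi u))
      (Ioi kappa) := fun _ hu => (sinh_div_sinh_phi hu).symm
  refine ⟨fun u hu v hv huv => ?_, ?_, ?_⟩
  · have hcosh : cosh u < cosh v := cosh_strictMonoOn (kappa_pos.trans hu).le
      (kappa_pos.trans hv).le huv
    rw [← hratio hu, ← hratio hv]
    exact sqrt_lt_sqrt (phiDerivSq_pos (three_halves_lt_cosh hv)).le
      (phiDerivSq_strictAntiOn (three_halves_lt_cosh hu) (three_halves_lt_cosh hv) hcosh)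
  · exact (tendsto_sqrt_atTop.comp
      (tendsto_phiDerivSq_nhdsGT.comp tendsto_cosh_nhdsGT_kappa)).congr'
      (eventuallyEq_nhdsWithin_of_eqOn hratio)
  · exact ((continuous_sqrt.tendsto' 1 1 sqrt_one).comp
      (tendsto_phiDerivSq_atTop.comp tendsto_cosh_atTop)).congr'
      (eventually_gt_atTop kappa |>.mono hratio)
end

section
/- For u > arccosh(3/2), the function u ↦ e^u − e^{φ(u)}, where φ(u) = arccosh(cosh u − 1/2), is strictly monotonically decreasing. -/
/-!
Write `ψ(u) = arcosh (cosh u - c)` with `c > 0`. Differentiating `cosh ψ = cosh u - c` gives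
`ψ' = sinh u / sinh ψ`, so the derivative of `exp u - exp ψ` is
`(exp u * sinh ψ - exp ψ * sinh u) / sinh ψ = sinh (ψ - u) / sinh ψ`,
which is negative because `0 < ψ < u`.
-/

open Set

lemma arcosh_eq_real_arcosh : arcosh = Real.arcosh := rfl

namespace Real

lemma exp_mul_sinh_sub_exp_mul_sinh (a b : ℝ) :
    exp a * sinh b - exp b * sinh a = sinh (b - a) := by
  rw [← cosh_add_sinh a, ← cosh_add_sinh b, sinh_sub]
  ring

variable {c u : ℝ}

lemma one_lt_cosh_sub_of_arcosh_one_add_lt (hc : 0 ≤ c) (hu : arcosh (1 + c) < u) :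
    1 < cosh u - c := by
  have h1c : 1 ≤ 1 + c := by linarith
  have hκ : 0 ≤ arcosh (1 + c) := arcosh_nonneg h1c
  have : cosh (arcosh (1 + c)) < cosh u := by
    rw [cosh_lt_cosh, abs_of_nonneg hκ, abs_of_pos (hκ.trans_lt hu)]
    exact hu
  rw [cosh_arcosh h1c] at this
  linarith

lemma arcosh_cosh_sub_lt_self (hc : 0 < c) (hu : 0 ≤ u) (h : 1 ≤ cosh u - c) :
    arcosh (cosh u - c) < u := by
  conv_rhs => rw [← arcosh_cosh hu]
  rw [arcosh_lt_arcosh (by linarith) (by linarith)]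
  linarith

lemma hasDerivAt_arcosh_cosh_sub (h : 1 < cosh u - c) :
    HasDerivAt (fun v => arcosh (cosh v - c))
      (sinh u / sinh (arcosh (cosh u - c))) u := by
  have := (hasDerivAt_arcosh h).comp u ((hasDerivAt_cosh u).sub_const c)
  rwa [← sinh_arcosh h.le, ← div_eq_inv_mul] at this

lemma hasDerivAt_exp_sub_exp_arcosh_cosh_sub (h : 1 < cosh u - c) :
    HasDerivAt (fun v => exp v - exp (arcosh (cosh v - c)))
      (sinh (arcosh (cosh u - c) - u) / sinh (arcosh (cosh u - c))) u := by
  have hψ : sinh (arcosh (cosh u - c)) ≠ 0 := (sinh_pos_iff.2 (arcosh_pos h)).ne'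
  refine ((hasDerivAt_exp u).sub
    ((hasDerivAt_exp _).comp u (hasDerivAt_arcosh_cosh_sub h))).congr_deriv ?_
  rw [← exp_mul_sinh_sub_exp_mul_sinh]
  field_simp

theorem strictAntiOn_exp_sub_exp_arcosh_cosh_sub (hc : 0 < c) :
    StrictAntiOn (fun u => exp u - exp (arcosh (cosh u - c))) (Ioi (arcosh (1 + c))) := by
  have hdom : ∀ u ∈ Ioi (arcosh (1 + c)), 1 < cosh u - c := fun u hu =>
    one_lt_cosh_sub_of_arcosh_one_add_lt hc.le hu
  have hderiv := fun u hu => hasDerivAt_exp_sub_exp_arcosh_cosh_sub (hdom u hu)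
  refine strictAntiOn_of_deriv_neg (convex_Ioi _)
    (fun u hu => (hderiv u hu).continuousAt.continuousWithinAt) fun u hu => ?_
  rw [interior_Ioi] at hu
  have hu0 : 0 ≤ u := (arcosh_nonneg (by linarith)).trans hu.le
  rw [(hderiv u hu).deriv]
  exact div_neg_of_neg_of_pos
    (sinh_neg_iff.2 (sub_neg.2 (arcosh_cosh_sub_lt_self hc hu0 (hdom u hu).le)))
    (sinh_pos_iff.2 (arcosh_pos (hdom u hu)))

end Real

theorem exp_u_sub_exp_phi_strictAnti :
    StrictAntiOn (fun u => Real.exp u - Real.exp (phi u)) (Set.Ioi kappa) := by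
  have hκ : kappa = Real.arcosh (1 + 1 / 2) := by
    rw [kappa, arcosh_eq_real_arcosh]
    norm_num
  rw [hκ]
  exact Real.strictAntiOn_exp_sub_exp_arcosh_cosh_sub one_half_pos
end
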